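/- For every solution x of the COVID-19 system with x(0) in the open positive orthant (0,∞)⁷, the total population satisfies Λ/(μ+d_I+d_A+d_H) ≤ liminf_{t→∞} N(t) and limsup_{t→∞} N(t) ≤ Λ/μ; equivalently, the distance from x(t) to the region D⁰₀ = { y in the nonnegative orthant : Λ/(μ+d_I+d_A+d_H) ≤ N(y) ≤ Λ/μ } tends to 0 as t → ∞. -/

import Mathlib

open scoped BigOperators

/-- The vector field of the deterministic SQEAIHR COVID-19 model.
State: `x = (S, Q, E, A, I, H, R)` indexed by `Fin 7`. -/
noncomputable def covidF (Λ b q lam μ σ εA γA dA εI γI dI γH dH θ p β₁ β₂ : ℝ)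
    (x : Fin 7 → ℝ) : Fin 7 → ℝ :=
  ![Λ - (β₁ - β₂ * x 4 / (b + x 4)) * x 0 * (x 4 + θ * x 3) + lam * x 1 - (μ + q) * x 0,
    q * x 0 - (μ + lam) * x 1,
    (β₁ - β₂ * x 4 / (b + x 4)) * x 0 * (x 4 + θ * x 3) - (μ + σ) * x 2,
    (1 - p) * σ * x 2 - (μ + εA + γA + dA) * x 3,
    σ * p * x 2 - (μ + εI + γI + dI) * x 4,
    εI * x 4 + εA * x 3 - (μ + dH + γH) * x 5,
    γH * x 5 + γI * x 4 + γA * x 3 - μ * x 6]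

/-- A solution of the system on `[0, ∞)`: a function differentiable (within `[0,∞)`) whose
derivative equals the vector field at every `t ≥ 0`. -/
def IsSolution (F : (Fin 7 → ℝ) → Fin 7 → ℝ) (x : ℝ → Fin 7 → ℝ) : Prop :=
  ∀ t : ℝ, 0 ≤ t → HasDerivWithinAt x (F (x t)) (Set.Ici (0 : ℝ)) t

/-!
Every component of the vector field satisfies `F y i ≥ -c y i` on bounded boxes of the closed
orthant, so along a solution no component can decay faster than exponentially: the positive
orthant is forward invariant. There the total population obeys
`N' = Λ - μ N - (d_A A + d_I I + d_H H)` with `0 ≤ d_A A + d_I I + d_H H ≤ (d_I + d_A + d_H) N`,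
so `N` is squeezed between the solutions of `N' = Λ - (μ + d_I + d_A + d_H) N` and `N' = Λ - μ N`
with the same initial value, which tend to the two ends of `[Λ/(μ+d_I+d_A+d_H), Λ/μ]`.
Rescaling `x t` onto `D⁰₀` moves it by at most the distance from `N t` to that interval.
-/

open Set Filter Topology Metric Real

theorem mul_exp_le_of_neg_mul_le_deriv {g g' : ℝ → ℝ} {c a b : ℝ} (hab : a ≤ b)
    (hg : ContinuousOn g (Icc a b)) (hd : ∀ t ∈ Ioo a b, HasDerivAt g (g' t) t)
    (h : ∀ t ∈ Ioo a b, -(c * g t) ≤ g' t) : g a * exp (-(c * (b - a))) ≤ g b := by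
  have hmono : MonotoneOn (fun t => g t * exp (c * t)) (Icc a b) := by
    refine monotoneOn_of_hasDerivWithinAt_nonneg (f' := fun t => (g' t + c * g t) * exp (c * t))
      (convex_Icc a b) (hg.mul (by fun_prop)) (fun t ht => ?_) (fun t ht => ?_) <;>
      rw [interior_Icc] at ht
    · have hexp : HasDerivAt (fun t => exp (c * t)) (exp (c * t) * c) t := by
        simpa using ((hasDerivAt_id t).const_mul c).exp
      exact (((hd t ht).fun_mul hexp).congr_deriv (by ring)).hasDerivWithinAt
    · exact mul_nonneg (by linarith [h t ht]) (exp_pos _).le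
  calc g a * exp (-(c * (b - a))) = g a * exp (c * a) * exp (-(c * b)) := by
        rw [mul_assoc, ← exp_add]; ring_nf
    _ ≤ g b * exp (c * b) * exp (-(c * b)) :=
        mul_le_mul_of_nonneg_right (hmono (left_mem_Icc.2 hab) (right_mem_Icc.2 hab) hab)
          (exp_pos _).le
    _ = g b := by rw [mul_assoc, ← exp_add]; simp

/-- The solution of `N' = Λ - m N`, `N 0 = N₀`. -/
noncomputable def relaxation (Λ m N₀ t : ℝ) : ℝ := Λ / m + (N₀ - Λ / m) * exp (-(m * t))

theorem tendsto_relaxation {Λ m N₀ : ℝ} (hm : 0 < m) :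
    Tendsto (relaxation Λ m N₀) atTop (𝓝 (Λ / m)) := by
  have hexp : Tendsto (fun t => exp (-(m * t))) atTop (𝓝 0) :=
    tendsto_exp_neg_atTop_nhds_zero.comp (tendsto_id.const_mul_atTop hm)
  have := (hexp.const_mul (N₀ - Λ / m)).const_add (Λ / m)
  rwa [mul_zero, add_zero] at this

section LinearDifferentialInequality

variable {N N' : ℝ → ℝ} {Λ m T : ℝ}

theorem le_relaxation_of_deriv_le (hm : m ≠ 0) (hT : 0 ≤ T) (hN : ContinuousOn N (Icc 0 T))
    (hd : ∀ t ∈ Ioo 0 T, HasDerivAt N (N' t) t) (h : ∀ t ∈ Ioo 0 T, N' t ≤ Λ - m * N t) :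
    N T ≤ relaxation Λ m (N 0) T := by
  have := mul_exp_le_of_neg_mul_le_deriv (g := fun t => Λ / m - N t) (c := m) hT
    (continuousOn_const.sub hN) (fun t ht => (hd t ht).const_sub _) fun t ht => by
      rw [mul_sub, mul_div_cancel₀ _ hm]; linarith [h t ht]
  rw [relaxation, sub_zero] at *
  linarith

theorem relaxation_le_of_le_deriv (hm : m ≠ 0) (hT : 0 ≤ T) (hN : ContinuousOn N (Icc 0 T))
    (hd : ∀ t ∈ Ioo 0 T, HasDerivAt N (N' t) t) (h : ∀ t ∈ Ioo 0 T, Λ - m * N t ≤ N' t) :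
    relaxation Λ m (N 0) T ≤ N T := by
  have := mul_exp_le_of_neg_mul_le_deriv (g := fun t => N t - Λ / m) (c := m) hT
    (hN.sub continuousOn_const) (fun t ht => (hd t ht).sub_const _) fun t ht => by
      rw [mul_sub, mul_div_cancel₀ _ hm]; linarith [h t ht]
  rw [relaxation, sub_zero] at *
  linarith

end LinearDifferentialInequality

/-- A quantitative form of quasi-positivity (`F y i ≥ 0` whenever `y ≥ 0` and `y i = 0`); it gives
forward invariance of the positive orthant without any Lipschitz assumption on `F`. -/
def QuasiPositive {ι : Type*} (F : (ι → ℝ) → ι → ℝ) : Prop :=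
  ∀ (C : ℝ) (i : ι), ∃ c : ℝ, ∀ y : ι → ℝ, (∀ j, 0 ≤ y j ∧ y j ≤ C) → -(c * y i) ≤ F y i

theorem exists_first_nonpos {ι : Type*} [Finite ι] {f : ℝ → ι → ℝ} {a b : ℝ} (hab : a ≤ b)
    (hf : ContinuousOn f (Icc a b)) (hb : ∃ i, f b i ≤ 0) :
    ∃ t₀ ∈ Icc a b, (∃ j, f t₀ j ≤ 0) ∧ ∀ t ∈ Ico a t₀, ∀ i, 0 < f t i := by
  set Z := ⋃ i, Icc a b ∩ (fun t => f t i) ⁻¹' Iic 0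
  have hZ : IsCompact Z := isCompact_iUnion fun i => isCompact_Icc.of_isClosed_subset
    (((continuous_apply i).comp_continuousOn hf).preimage_isClosed_of_isClosed isClosed_Icc
      isClosed_Iic) inter_subset_left
  obtain ⟨i, hi⟩ := hb
  obtain ⟨t₀, ht₀, hleast⟩ := hZ.exists_isLeast ⟨b, mem_iUnion.2 ⟨i, right_mem_Icc.2 hab, hi⟩⟩
  obtain ⟨j, ht₀I, hj⟩ := mem_iUnion.1 ht₀
  refine ⟨t₀, ht₀I, ⟨j, hj⟩, fun t ht k => ?_⟩
  by_contra! htk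
  exact ht.2.not_ge (hleast (mem_iUnion.2 ⟨k, ⟨ht.1, ht.2.le.trans ht₀I.2⟩, htk⟩))

theorem pos_of_quasiPositive {ι : Type*} [Fintype ι] {F : (ι → ℝ) → ι → ℝ} {x : ℝ → ι → ℝ}
    (hF : QuasiPositive F) (hx : ∀ t, 0 ≤ t → HasDerivWithinAt x (F (x t)) (Ici 0) t)
    (h0 : ∀ i, 0 < x 0 i) {T : ℝ} (hT : 0 ≤ T) (i : ι) : 0 < x T i := by
  have hcont : ContinuousOn x (Icc 0 T) := fun t ht =>
    (hx t ht.1).continuousWithinAt.mono Icc_subset_Ici_self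
  by_contra! hTi
  obtain ⟨t₀, ht₀, ⟨j, hj⟩, hbefore⟩ := exists_first_nonpos hT hcont ⟨i, hTi⟩
  obtain ⟨C, hC⟩ := isCompact_Icc.exists_bound_of_continuousOn hcont
  obtain ⟨c, hc⟩ := hF C j
  have hbox : ∀ t ∈ Ioo 0 t₀, ∀ k, 0 ≤ x t k ∧ x t k ≤ C := fun t ht k =>
    ⟨(hbefore t (Ioo_subset_Ico_self ht) k).le, (Real.le_norm_self _).trans <|
      (norm_le_pi_norm (x t) k).trans (hC t ⟨ht.1.le, ht.2.le.trans ht₀.2⟩)⟩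
  have hdecay := mul_exp_le_of_neg_mul_le_deriv (g := fun t => x t j) ht₀.1
    ((continuous_apply j).comp_continuousOn (hcont.mono (Icc_subset_Icc_right ht₀.2)))
    (fun t ht => hasDerivAt_pi.1 ((hx t ht.1.le).hasDerivAt (Ici_mem_nhds ht.1)) j)
    (fun t ht => hc (x t) (hbox t ht))
  have := mul_pos (h0 j) (exp_pos (-(c * (t₀ - 0))))
  linarith

section TotalPopulation

variable {ι : Type*} [Fintype ι] {F : (ι → ℝ) → ι → ℝ} {x : ℝ → ι → ℝ} {Λ m T : ℝ}

theorem continuousOn_sum_of_hasDerivWithinAt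
    (hx : ∀ t, 0 ≤ t → HasDerivWithinAt x (F (x t)) (Ici 0) t) :
    ContinuousOn (fun t => ∑ i, x t i) (Ici 0) :=
  continuousOn_finsetSum _ fun i _ =>
    (continuous_apply i).comp_continuousOn fun t ht => (hx t ht).continuousWithinAt

theorem hasDerivAt_sum_of_hasDerivWithinAt
    (hx : ∀ t, 0 ≤ t → HasDerivWithinAt x (F (x t)) (Ici 0) t) {t : ℝ} (ht : 0 < t) :
    HasDerivAt (fun t => ∑ i, x t i) (∑ i, F (x t) i) t :=
  HasDerivAt.fun_sum fun i _ => hasDerivAt_pi.1 ((hx t ht.le).hasDerivAt (Ici_mem_nhds ht)) i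

theorem sum_le_relaxation (hx : ∀ t, 0 ≤ t → HasDerivWithinAt x (F (x t)) (Ici 0) t)
    (hF : ∀ t, 0 < t → ∑ i, F (x t) i ≤ Λ - m * ∑ i, x t i) (hm : m ≠ 0) (hT : 0 ≤ T) :
    ∑ i, x T i ≤ relaxation Λ m (∑ i, x 0 i) T :=
  le_relaxation_of_deriv_le (N := fun t => ∑ i, x t i) hm hT
    ((continuousOn_sum_of_hasDerivWithinAt hx).mono Icc_subset_Ici_self)
    (fun _ ht => hasDerivAt_sum_of_hasDerivWithinAt hx ht.1) fun t ht => hF t ht.1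

theorem relaxation_le_sum (hx : ∀ t, 0 ≤ t → HasDerivWithinAt x (F (x t)) (Ici 0) t)
    (hF : ∀ t, 0 < t → Λ - m * ∑ i, x t i ≤ ∑ i, F (x t) i) (hm : m ≠ 0) (hT : 0 ≤ T) :
    relaxation Λ m (∑ i, x 0 i) T ≤ ∑ i, x T i :=
  relaxation_le_of_le_deriv (N := fun t => ∑ i, x t i) hm hT
    ((continuousOn_sum_of_hasDerivWithinAt hx).mono Icc_subset_Ici_self)
    (fun _ ht => hasDerivAt_sum_of_hasDerivWithinAt hx ht.1) fun t ht => hF t ht.1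

end TotalPopulation

theorem le_liminf_and_limsup_le_of_squeeze {α : Type*} {L : Filter α} [L.NeBot]
    {f l u : α → ℝ} {a b : ℝ} (hl : Tendsto l L (𝓝 a)) (hu : Tendsto u L (𝓝 b))
    (hlf : ∀ᶠ t in L, l t ≤ f t) (hfu : ∀ᶠ t in L, f t ≤ u t) :
    a ≤ liminf f L ∧ limsup f L ≤ b := by
  have hbdd : IsBoundedUnder (· ≤ ·) L f := hu.isBoundedUnder_le.mono_le hfu
  have hbdd' : IsBoundedUnder (· ≥ ·) L f := hl.isBoundedUnder_ge.mono_ge hlf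
  constructor
  · rw [← hl.liminf_eq]
    exact liminf_le_liminf hlf hl.isBoundedUnder_ge hbdd.isCoboundedUnder_ge
  · rw [← hu.limsup_eq]
    exact limsup_le_limsup hfu hbdd'.isCoboundedUnder_le hu.isBoundedUnder_le

theorem infDist_Icc_le {a b l u s : ℝ} (hab : a ≤ b) (hs : s ∈ Icc l u) :
    infDist s (Icc a b) ≤ dist l a + dist u b := by
  have hla : a - l ≤ |l - a| := by rw [abs_sub_comm]; exact le_abs_self _
  have hub : u - b ≤ |u - b| := le_abs_self _
  rw [Real.dist_eq, Real.dist_eq]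
  rcases lt_or_ge s a with hsa | has
  · calc infDist s (Icc a b) ≤ dist s a := infDist_le_dist_of_mem (left_mem_Icc.2 hab)
      _ = a - s := by rw [Real.dist_eq, abs_of_neg (by linarith)]; ring
      _ ≤ |l - a| + |u - b| := by linarith [hs.1, abs_nonneg (u - b)]
  rcases le_or_gt s b with hsb | hsb
  · rw [infDist_zero_of_mem (mem_Icc.2 ⟨has, hsb⟩)]; positivity
  · calc infDist s (Icc a b) ≤ dist s b := infDist_le_dist_of_mem (right_mem_Icc.2 hab)
      _ = s - b := by rw [Real.dist_eq, abs_of_pos (by linarith)]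
      _ ≤ |l - a| + |u - b| := by linarith [hs.2, abs_nonneg (l - a)]

theorem tendsto_infDist_Icc_of_squeeze {α : Type*} {L : Filter α}
    {f l u : α → ℝ} {a b : ℝ} (hab : a ≤ b) (hl : Tendsto l L (𝓝 a)) (hu : Tendsto u L (𝓝 b))
    (hlf : ∀ᶠ t in L, l t ≤ f t) (hfu : ∀ᶠ t in L, f t ≤ u t) :
    Tendsto (fun t => infDist (f t) (Icc a b)) L (𝓝 0) := by
  refine squeeze_zero' (.of_forall fun t => infDist_nonneg) ?_
    (by simpa using (tendsto_iff_dist_tendsto_zero.1 hl).add (tendsto_iff_dist_tendsto_zero.1 hu))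
  filter_upwards [hlf, hfu] with t hlt hut using infDist_Icc_le hab (mem_Icc.2 ⟨hlt, hut⟩)

theorem infDist_le_infDist_sum_Icc {ι : Type*} [Fintype ι] {y : ι → ℝ} {a b : ℝ}
    (ha : 0 ≤ a) (hab : a ≤ b) (hy : ∀ i, 0 ≤ y i) (hs : 0 < ∑ i, y i) :
    infDist y {z | (∀ i, 0 ≤ z i) ∧ a ≤ ∑ i, z i ∧ ∑ i, z i ≤ b} ≤
      infDist (∑ i, y i) (Icc a b) := by
  set s := ∑ i, y i
  refine (le_infDist (nonempty_Icc.2 hab)).2 fun r hr => ?_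
  have hscaled : r / s * s = r := div_mul_cancel₀ r hs.ne'
  calc infDist y _ ≤ dist y (fun i => r / s * y i) := by
        refine infDist_le_dist_of_mem ⟨fun i => ?_, ?_⟩
        · exact mul_nonneg (div_nonneg (ha.trans hr.1) hs.le) (hy i)
        · rw [← Finset.mul_sum, hscaled]; exact hr
    _ ≤ dist s r := by
        refine (dist_pi_le_iff dist_nonneg).2 fun i => ?_
        have hyi : y i ≤ s := Finset.single_le_sum (fun j _ => hy j) (Finset.mem_univ i)
        calc dist (y i) (r / s * y i) = y i / s * dist s r := by
              rw [Real.dist_eq, Real.dist_eq, ← abs_of_nonneg (div_nonneg (hy i) hs.le),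
                ← abs_mul]
              congr 1; field_simp
          _ ≤ 1 * dist s r := by gcongr; exact div_le_one_of_le₀ hyi hs.le
          _ = dist s r := one_mul _

theorem sub_mul_div_add_mem_Icc {β₁ β₂ b I : ℝ} (hb : 0 ≤ b) (hI : 0 ≤ I) (hβ₂ : 0 ≤ β₂)
    (hβ : β₂ ≤ β₁) : β₁ - β₂ * I / (b + I) ∈ Icc 0 β₁ := by
  have hle : β₂ * I / (b + I) ≤ β₂ := div_le_of_le_mul₀ (by positivity) hβ₂ (by nlinarith)
  have hnn : 0 ≤ β₂ * I / (b + I) := by positivity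
  constructor <;> linarith

theorem incidence_mem_Icc {β₁ β₂ b θ S A I C : ℝ} (hb : 0 ≤ b) (hβ₂ : 0 ≤ β₂) (hβ : β₂ ≤ β₁)
    (hθ : 0 ≤ θ) (hS : 0 ≤ S) (hA : A ∈ Icc 0 C) (hI : I ∈ Icc 0 C) :
    (β₁ - β₂ * I / (b + I)) * S * (I + θ * A) ∈ Icc 0 (β₁ * (1 + θ) * C * S) := by
  obtain ⟨hrate, hrate'⟩ := sub_mul_div_add_mem_Icc hb hI.1 hβ₂ hβ
  have hforce : 0 ≤ I + θ * A := add_nonneg hI.1 (mul_nonneg hθ hA.1)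
  have hforce' : I + θ * A ≤ (1 + θ) * C := by
    linarith [hI.2, mul_le_mul_of_nonneg_left hA.2 hθ]
  have hβ₁ : 0 ≤ β₁ := hβ₂.trans hβ
  refine ⟨by positivity, ?_⟩
  calc (β₁ - β₂ * I / (b + I)) * S * (I + θ * A) ≤ β₁ * S * ((1 + θ) * C) := by gcongr
    _ = β₁ * (1 + θ) * C * S := by ring

theorem covidF_quasiPositive {Λ b q lam μ σ εA γA dA εI γI dI γH dH θ p β₁ β₂ : ℝ}
    (hΛ : 0 ≤ Λ) (hb : 0 ≤ b) (hq : 0 ≤ q) (hlam : 0 ≤ lam) (hσ : 0 ≤ σ) (hεA : 0 ≤ εA)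
    (hγA : 0 ≤ γA) (hεI : 0 ≤ εI) (hγI : 0 ≤ γI) (hγH : 0 ≤ γH) (hθ : 0 ≤ θ)
    (hp : p ∈ Icc (0 : ℝ) 1) (hβ₂ : 0 ≤ β₂) (hβ : β₂ ≤ β₁) :
    QuasiPositive (covidF Λ b q lam μ σ εA γA dA εI γI dI γH dH θ p β₁ β₂) := by
  intro C i
  have hinc (y : Fin 7 → ℝ) (hy : ∀ j, 0 ≤ y j ∧ y j ≤ C) :=
    incidence_mem_Icc hb hβ₂ hβ hθ (hy 0).1 (hy 3) (hy 4)
  fin_cases i <;> simp only [covidF, Fin.isValue, Fin.zero_eta, Fin.mk_one, Fin.reduceFinMk,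
    Matrix.cons_val, Matrix.cons_val_zero, Matrix.cons_val_one, neg_le_sub_iff_le_add]
  · exact ⟨μ + q + β₁ * (1 + θ) * C, fun y hy => by
      linarith [(hinc y hy).2, mul_nonneg hlam (hy 1).1]⟩
  · exact ⟨μ + lam, fun y hy => by linarith [mul_nonneg hq (hy 0).1]⟩
  · exact ⟨μ + σ, fun y hy => by linarith [(hinc y hy).1]⟩
  · exact ⟨μ + εA + γA + dA, fun y hy => by
      linarith [mul_nonneg (mul_nonneg (sub_nonneg.2 hp.2) hσ) (hy 2).1]⟩
  · exact ⟨μ + εI + γI + dI, fun y hy => by linarith [mul_nonneg (mul_nonneg hσ hp.1) (hy 2).1]⟩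
  · exact ⟨μ + dH + γH, fun y hy => by
      linarith [mul_nonneg hεI (hy 4).1, mul_nonneg hεA (hy 3).1]⟩
  · exact ⟨μ, fun y hy => by
      linarith [mul_nonneg hγH (hy 5).1, mul_nonneg hγI (hy 4).1, mul_nonneg hγA (hy 3).1]⟩

section TotalPopulationCovid

variable {Λ b q lam μ σ εA γA dA εI γI dI γH dH θ p β₁ β₂ : ℝ}

theorem sum_covidF (y : Fin 7 → ℝ) :
    ∑ i, covidF Λ b q lam μ σ εA γA dA εI γI dI γH dH θ p β₁ β₂ y i =
      Λ - μ * ∑ i, y i - (dA * y 3 + dI * y 4 + dH * y 5) := by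
  simp only [covidF, Fin.sum_univ_seven, Fin.isValue, Matrix.cons_val]
  ring

theorem sum_covidF_le (hdA : 0 ≤ dA) (hdI : 0 ≤ dI) (hdH : 0 ≤ dH) {y : Fin 7 → ℝ}
    (hy : ∀ i, 0 ≤ y i) :
    ∑ i, covidF Λ b q lam μ σ εA γA dA εI γI dI γH dH θ p β₁ β₂ y i ≤ Λ - μ * ∑ i, y i := by
  rw [sum_covidF]
  have := hy 3; have := hy 4; have := hy 5
  have : 0 ≤ dA * y 3 + dI * y 4 + dH * y 5 := by positivity
  linarith

theorem sub_mul_sum_le_sum_covidF (hdA : 0 ≤ dA) (hdI : 0 ≤ dI) (hdH : 0 ≤ dH)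
    {y : Fin 7 → ℝ} (hy : ∀ i, 0 ≤ y i) :
    Λ - (μ + dI + dA + dH) * ∑ i, y i ≤
      ∑ i, covidF Λ b q lam μ σ εA γA dA εI γI dI γH dH θ p β₁ β₂ y i := by
  have hle (k : Fin 7) : y k ≤ ∑ i, y i :=
    Finset.single_le_sum (fun j _ => hy j) (Finset.mem_univ k)
  rw [sum_covidF]
  linarith [mul_le_mul_of_nonneg_left (hle 3) hdA, mul_le_mul_of_nonneg_left (hle 4) hdI,
    mul_le_mul_of_nonneg_left (hle 5) hdH]

end TotalPopulationCovid

/-- asymptotic bounds on the total population, and attraction to the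
region `D⁰₀ = { y ≥ 0 : Λ/(μ+d_I+d_A+d_H) ≤ N(y) ≤ Λ/μ }`. -/
theorem covid_region_D00_globally_attracting
    (Λ b q lam μ σ εA γA dA εI γI dI γH dH θ p β₁ β₂ : ℝ)
    (hΛ : 0 < Λ) (hb : 0 < b) (hq : 0 < q) (hlam : 0 < lam) (hμ : 0 < μ)
    (hσ : 0 < σ) (hεA : 0 < εA) (hγA : 0 < γA) (hdA : 0 < dA)
    (hεI : 0 < εI) (hγI : 0 < γI) (hdI : 0 < dI) (hγH : 0 < γH) (hdH : 0 < dH)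
    (hθ : θ ∈ Set.Ioo (0 : ℝ) 1) (hp : p ∈ Set.Ioo (0 : ℝ) 1)
    (hβ₂ : 0 < β₂) (hβ : β₂ ≤ β₁)
    (x : ℝ → Fin 7 → ℝ)
    (hx : IsSolution (covidF Λ b q lam μ σ εA γA dA εI γI dI γH dH θ p β₁ β₂) x)
    (h0 : ∀ i, 0 < x 0 i) :
    Λ / (μ + dI + dA + dH) ≤ Filter.liminf (fun t => ∑ i, x t i) Filter.atTop ∧
    Filter.limsup (fun t => ∑ i, x t i) Filter.atTop ≤ Λ / μ ∧
    Filter.Tendsto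
      (fun t => Metric.infDist (x t)
        {y : Fin 7 → ℝ | (∀ i, 0 ≤ y i) ∧
          Λ / (μ + dI + dA + dH) ≤ (∑ i, y i) ∧ (∑ i, y i) ≤ Λ / μ})
      Filter.atTop (nhds 0) := by
  have hpos : ∀ t, 0 ≤ t → ∀ i, 0 < x t i := fun t ht =>
    pos_of_quasiPositive (covidF_quasiPositive hΛ.le hb.le hq.le hlam.le hσ.le hεA.le hγA.le
      hεI.le hγI.le hγH.le hθ.1.le (Ioo_subset_Icc_self hp) hβ₂.le hβ) hx h0 ht
  have hnonneg : ∀ t, 0 < t → ∀ i, 0 ≤ x t i := fun t ht i => (hpos t ht.le i).le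
  have hM : 0 < μ + dI + dA + dH := by positivity
  have hupper : ∀ᶠ t in atTop, ∑ i, x t i ≤ relaxation Λ μ (∑ i, x 0 i) t :=
    (eventually_ge_atTop 0).mono fun t ht => sum_le_relaxation hx
      (fun s hs => sum_covidF_le hdA.le hdI.le hdH.le (hnonneg s hs)) hμ.ne' ht
  have hlower : ∀ᶠ t in atTop, relaxation Λ (μ + dI + dA + dH) (∑ i, x 0 i) t ≤ ∑ i, x t i :=
    (eventually_ge_atTop 0).mono fun t ht => relaxation_le_sum hx
      (fun s hs => sub_mul_sum_le_sum_covidF hdA.le hdI.le hdH.le (hnonneg s hs)) hM.ne' ht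
  have hab : Λ / (μ + dI + dA + dH) ≤ Λ / μ :=
    div_le_div_of_nonneg_left hΛ.le hμ (by linarith)
  obtain ⟨hliminf, hlimsup⟩ := le_liminf_and_limsup_le_of_squeeze (tendsto_relaxation hM)
    (tendsto_relaxation hμ) hlower hupper
  refine ⟨hliminf, hlimsup, squeeze_zero' (.of_forall fun t => infDist_nonneg) ?_
    (tendsto_infDist_Icc_of_squeeze hab (tendsto_relaxation hM) (tendsto_relaxation hμ) hlower
      hupper)⟩
  filter_upwards [eventually_ge_atTop 0] with t ht
  exact infDist_le_infDist_sum_Icc (by positivity) hab (fun i => (hpos t ht i).le)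
    (Finset.sum_pos (fun i _ => hpos t ht i) Finset.univ_nonempty)
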